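/- Minimal valuation soundness for a single boxed-atom antecedent: let F = (W,N) be a neighbourhood frame, w ∈ W, and ψ(p) a positive INL formula in the single variable p. Then Box_1(⊤; p) → ψ(p) is valid at w under all valuations iff for every S ∈ N(w), ψ holds at w under the valuation V_S with V_S(p) = S. -/

import Mathlib

/-!
`Box_1(⊤; p)` holds at `w` exactly when some nonempty `S ∈ N(w)` lies inside `V(p)`.
Choosing `V(p) = S` makes the antecedent true, which gives one direction. Conversely,
positive formulas are monotone in the valuation, so `ψ`, true at `w` under `V_S`, stays
true under every `V` with `S ⊆ V(p)`.
-/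

/-- Formulas of instantial neighbourhood logic (INL). Propositional variables
are indexed by naturals; `box n φs φ` is the (n+1)-ary modality `Box_n(φ_1,…,φ_n; φ)`. -/
inductive Formula : Type where
  | var : ℕ → Formula
  | bot : Formula
  | top : Formula
  | neg : Formula → Formula
  | and : Formula → Formula → Formula
  | or : Formula → Formula → Formula
  | box : (n : ℕ) → (Fin n → Formula) → Formula → Formula

def Formula.imp (φ ψ : Formula) : Formula := .or (.neg φ) ψ

/-- Satisfaction on a neighbourhood frame `(W, N)` under valuation `V`. -/
def Sat {W : Type} (N : W → Set (Set W)) (V : ℕ → Set W) : Formula → W → Prop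
  | .var p, w => w ∈ V p
  | .bot, _ => False
  | .top, _ => True
  | .neg φ, w => ¬ Sat N V φ w
  | .and φ ψ, w => Sat N V φ w ∧ Sat N V ψ w
  | .or φ ψ, w => Sat N V φ w ∨ Sat N V ψ w
  | .box _ φs φ, w =>
      ∃ S ∈ N w, (∀ s ∈ S, Sat N V φ s) ∧ ∀ i, ∃ s ∈ S, Sat N V (φs i) s

mutual
  /-- Every occurrence of every propositional variable is under an even number of
  negations. -/
  inductive Positive : Formula → Prop where
    | var (p : ℕ) : Positive (.var p)
    | bot : Positive .bot
    | top : Positive .top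
    | neg {φ} : Negative φ → Positive (.neg φ)
    | and {φ ψ} : Positive φ → Positive ψ → Positive (.and φ ψ)
    | or {φ ψ} : Positive φ → Positive ψ → Positive (.or φ ψ)
    | box {n φs φ} : (∀ i, Positive (φs i)) → Positive φ → Positive (.box n φs φ)
  /-- Every occurrence of every propositional variable is under an odd number of
  negations. -/
  inductive Negative : Formula → Prop where
    | bot : Negative .bot
    | top : Negative .top
    | neg {φ} : Positive φ → Negative (.neg φ)
    | and {φ ψ} : Negative φ → Negative ψ → Negative (.and φ ψ)
    | or {φ ψ} : Negative φ → Negative ψ → Negative (.or φ ψ)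
    | box {n φs φ} : (∀ i, Negative (φs i)) → Negative φ → Negative (.box n φs φ)
end

/-- The set of propositional variables occurring in a formula. -/
def FVars : Formula → Set ℕ
  | .var p => {p}
  | .bot => ∅
  | .top => ∅
  | .neg φ => FVars φ
  | .and φ ψ => FVars φ ∪ FVars ψ
  | .or φ ψ => FVars φ ∪ FVars ψ
  | .box _ φs φ => (⋃ i, FVars (φs i)) ∪ FVars φ

section

variable {W : Type} {N : W → Set (Set W)} {V V' : ℕ → Set W}

theorem sat_box_of_imp {n : ℕ} {φs : Fin n → Formula} {φ : Formula} {w : W}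
    (hφs : ∀ i s, Sat N V (φs i) s → Sat N V' (φs i) s)
    (hφ : ∀ s, Sat N V φ s → Sat N V' φ s) :
    Sat N V (.box n φs φ) w → Sat N V' (.box n φs φ) w :=
  fun ⟨S, hS, hall, hinst⟩ =>
    ⟨S, hS, fun s hs => hφ s (hall s hs), fun i => (hinst i).imp fun s => And.imp_right (hφs i s)⟩

theorem sat_monotone_antitone (φ : Formula) (h : ∀ p ∈ FVars φ, V p ⊆ V' p) :
    (Positive φ → ∀ w, Sat N V φ w → Sat N V' φ w) ∧
      (Negative φ → ∀ w, Sat N V' φ w → Sat N V φ w) := by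
  induction φ with
  | var p => exact ⟨fun _ w hw => h p rfl hw, nofun⟩
  | bot | top => exact ⟨fun _ _ => id, fun _ _ => id⟩
  | neg φ ih =>
    obtain ⟨ihpos, ihneg⟩ := ih h
    exact ⟨fun (.neg hφ) w hw hc => hw (ihneg hφ w hc),
      fun (.neg hφ) w hw hc => hw (ihpos hφ w hc)⟩
  | and φ ψ ihφ ihψ =>
    obtain ⟨φpos, φneg⟩ := ihφ fun p hp => h p (.inl hp)
    obtain ⟨ψpos, ψneg⟩ := ihψ fun p hp => h p (.inr hp)
    exact ⟨fun (.and hφ hψ) w hw => ⟨φpos hφ w hw.1, ψpos hψ w hw.2⟩,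
      fun (.and hφ hψ) w hw => ⟨φneg hφ w hw.1, ψneg hψ w hw.2⟩⟩
  | or φ ψ ihφ ihψ =>
    obtain ⟨φpos, φneg⟩ := ihφ fun p hp => h p (.inl hp)
    obtain ⟨ψpos, ψneg⟩ := ihψ fun p hp => h p (.inr hp)
    exact ⟨fun (.or hφ hψ) w hw => hw.imp (φpos hφ w) (ψpos hψ w),
      fun (.or hφ hψ) w hw => hw.imp (φneg hφ w) (ψneg hψ w)⟩
  | box n φs φ ihs ih =>
    have ihs i := ihs i fun p hp => h p (.inl (Set.mem_iUnion.2 ⟨i, hp⟩))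
    obtain ⟨φpos, φneg⟩ := ih fun p hp => h p (.inr hp)
    exact ⟨fun (.box hφs hφ) _ => sat_box_of_imp (fun i => (ihs i).1 (hφs i)) (φpos hφ),
      fun (.box hφs hφ) _ => sat_box_of_imp (fun i => (ihs i).2 (hφs i)) (φneg hφ)⟩

theorem Positive.sat_mono {φ : Formula} (hφ : Positive φ) (h : ∀ p ∈ FVars φ, V p ⊆ V' p)
    {w : W} : Sat N V φ w → Sat N V' φ w :=
  (sat_monotone_antitone φ h).1 hφ w

theorem sat_imp {φ ψ : Formula} {w : W} :
    Sat N V (φ.imp ψ) w ↔ (Sat N V φ w → Sat N V ψ w) := by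
  simp only [Formula.imp, Sat, imp_iff_not_or]

theorem sat_box_top_var_iff {p : ℕ} {w : W} :
    Sat N V (.box 1 ![.top] (.var p)) w ↔ ∃ S ∈ N w, S.Nonempty ∧ S ⊆ V p := by
  simp only [Sat, Fin.forall_fin_one, Matrix.cons_val_zero, and_true]
  exact exists_congr fun S => and_congr_right fun _ => and_comm

end

/-- minimal valuation soundness for a single boxed-atom antecedent.
Let `ψ` be a positive INL formula in the single variable `p := var 0`. Then
`Box_1(⊤; p) → ψ` is valid at `w` under all valuations iff for every nonempty
`S ∈ N(w)`, `ψ` holds at `w` under the minimal valuation `V_S` with `V_S(p) = S`. -/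
theorem stmt_18 {W : Type} (N : W → Set (Set W)) (w : W) (ψ : Formula)
    (hpos : Positive ψ) (hvars : FVars ψ ⊆ {0}) :
    (∀ V : ℕ → Set W,
        Sat N V (Formula.imp (.box 1 ![Formula.top] (.var 0)) ψ) w) ↔
      ∀ S ∈ N w, S.Nonempty → Sat N (fun _ => S) ψ w := by
  simp only [sat_imp, sat_box_top_var_iff]
  constructor
  · intro h S hS hne
    exact h (fun _ => S) ⟨S, hS, hne, subset_rfl⟩
  · rintro h V ⟨S, hS, hne, hSV⟩
    refine hpos.sat_mono (fun p hp => ?_) (h S hS hne)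
    rwa [hvars hp]
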